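/- arXiv:1905.09159 — 2 statements merged into one kernel-verified Lean document; each statement's English description precedes it below -/
import Mathlib

section
/- Let α ∈ (0,1), let g : ℝ^d → ℝ^d satisfy a global Lipschitz condition with constant L > 0, let T > 0, and let f, h : [0,T] → ℝ^d be continuous. If x_f and x_h are the unique continuous solutions on [0,T] of the singular Volterra integral equations x_f(t) = f(t) + (1/Γ(α)) ∫₀ᵗ (t−s)^{α−1} g(x_f(s)) ds and x_h(t) = h(t) + (1/Γ(α)) ∫₀ᵗ (t−s)^{α−1} g(x_h(s)) ds, then in the supremum norm on C([0,T], ℝ^d), ‖x_f − x_h‖_∞ ≤ ‖f − h‖_∞ · E_α(L T^α). In particular, the solution depends continuously on the input function f in the supremum norm. -/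
/-!
Write `I^α φ (t) = Γ(α)⁻¹ ∫₀ᵗ (t - s)^(α-1) φ(s) ds` for the Riemann–Liouville integral.
Subtracting the two equations and using the Lipschitz bound, `u = ‖x_f - x_h‖` satisfies
`u ≤ F + L I^α u` with `F = ‖f - h‖_∞`. Since the Beta integral gives
`L I^α ((L s^α)^k / Γ(αk+1)) = (L t^α)^(k+1) / Γ(α(k+1)+1)`, iterating this inequality
`n` times from an a priori bound `u ≤ M` yields
`u(t) ≤ F ∑_{k<n} (L t^α)^k / Γ(αk+1) + M (L t^α)^n / Γ(αn+1)`.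
The Mittag-Leffler series converges (ratio test, using log-convexity of `Γ`), so the remainder
vanishes as `n → ∞`, and `E_α` is monotone on `[0, ∞)`.
-/

open Real MeasureTheory Set

/-- The Mittag-Leffler function `E_α(t) = ∑_{k=0}^∞ t^k / Γ(αk+1)`. -/
noncomputable def mittagLeffler (α t : ℝ) : ℝ :=
  ∑' k : ℕ, t ^ k / Real.Gamma (α * k + 1)

open Filter Topology

theorem Real.Gamma_add_le_Gamma_mul_rpow {x β : ℝ} (hx : 0 < x) (hβ0 : 0 < β) (hβ1 : β < 1) :
    Gamma (x + β) ≤ Gamma x * x ^ β := by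
  have hconv := Gamma_mul_add_mul_le_rpow_Gamma_mul_rpow_Gamma hx (by linarith : 0 < x + 1)
    (by linarith : 0 < 1 - β) hβ0 (by ring)
  rw [show (1 - β) * x + β * (x + 1) = x + β by ring, Gamma_add_one hx.ne',
    mul_rpow hx.le (Gamma_pos_of_pos hx).le] at hconv
  calc Gamma (x + β) ≤ Gamma x ^ (1 - β) * (x ^ β * Gamma x ^ β) := hconv
    _ = Gamma x * x ^ β := by
      rw [mul_left_comm, ← rpow_add (Gamma_pos_of_pos hx), sub_add_cancel, rpow_one,
        mul_comm]

theorem Real.Gamma_mul_rpow_le_two_mul_Gamma_add {y α : ℝ} (hy : 1 ≤ y) (hα0 : 0 < α)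
    (hα1 : α < 1) : Gamma y * y ^ α ≤ 2 * Gamma (y + α) := by
  have hy0 : 0 < y := by linarith
  have hyα : 0 < y + α := by linarith
  have hgautschi := Gamma_add_le_Gamma_mul_rpow hyα (by linarith : 0 < 1 - α) (by linarith)
  rw [show y + α + (1 - α) = y + 1 by ring, Gamma_add_one hy0.ne', rpow_sub hyα, rpow_one,
    mul_div_assoc', le_div_iff₀ (rpow_pos_of_pos hyα α)] at hgautschi
  have hpow : y ^ α ≤ (y + α) ^ α := rpow_le_rpow hy0.le (by linarith) hα0.le
  have hΓ : 0 ≤ Gamma y := (Gamma_pos_of_pos hy0).le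
  have hΓα : 0 ≤ Gamma (y + α) := (Gamma_pos_of_pos hyα).le
  nlinarith [mul_le_mul_of_nonneg_left hpow hΓ, mul_le_mul_of_nonneg_left hpow hy0.le]

noncomputable def mittagLefflerTerm (α x : ℝ) (k : ℕ) : ℝ :=
  x ^ k / Gamma (α * k + 1)

theorem summable_mittagLefflerTerm {α : ℝ} (hα0 : 0 < α) (hα1 : α < 1) (x : ℝ) :
    Summable (mittagLefflerTerm α x) := by
  refine summable_of_ratio_norm_eventually_le (r := 1 / 2) (by norm_num) ?_
  have hlarge : ∀ᶠ k : ℕ in atTop, 4 * |x| ≤ (α * k + 1) ^ α :=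
    ((tendsto_rpow_atTop hα0).comp <| tendsto_atTop_add_const_right _ 1 <|
      tendsto_natCast_atTop_atTop.const_mul_atTop hα0).eventually_ge_atTop _
  filter_upwards [hlarge] with k hk
  have hsucc : α * ((k + 1 : ℕ) : ℝ) + 1 = α * k + 1 + α := by push_cast; ring
  simp only [mittagLefflerTerm, norm_div, norm_mul, norm_pow, Real.norm_eq_abs, hsucc, pow_succ]
  set y : ℝ := α * k + 1
  have hy : 1 ≤ y := le_add_of_nonneg_left (by positivity)
  have hΓ : 0 < Gamma y := Gamma_pos_of_pos (by linarith)
  have hΓα : 0 < Gamma (y + α) := Gamma_pos_of_pos (by linarith)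
  have hratio : |x| * Gamma y ≤ 1 / 2 * Gamma (y + α) := by
    nlinarith [Gamma_mul_rpow_le_two_mul_Gamma_add hy hα0 hα1, mul_le_mul_of_nonneg_left hk hΓ.le]
  rw [abs_of_pos hΓ, abs_of_pos hΓα]
  rw [div_le_iff₀ hΓα, mul_div_assoc', div_mul_eq_mul_div, le_div_iff₀ hΓ]
  nlinarith [pow_nonneg (abs_nonneg x) k]

theorem mittagLeffler_monotoneOn {α : ℝ} (hα0 : 0 < α) (hα1 : α < 1) :
    MonotoneOn (mittagLeffler α) (Ici 0) := fun x hx y _ hxy =>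
  Summable.tsum_le_tsum (fun k => div_le_div_of_nonneg_right (pow_le_pow_left₀ hx hxy k)
    (Gamma_pos_of_pos (by positivity)).le) (summable_mittagLefflerTerm hα0 hα1 x)
    (summable_mittagLefflerTerm hα0 hα1 y)

theorem integral_rpow_mul_rpow_sub {a b t : ℝ} (ha : 0 < a) (hb : 0 < b) (ht : 0 < t) :
    ∫ s in (0:ℝ)..t, s ^ (a - 1) * (t - s) ^ (b - 1) =
      t ^ (a + b - 1) * (Gamma a * Gamma b / Gamma (a + b)) := by
  have hcomplex := Complex.betaIntegral_scaled (a : ℂ) (b : ℂ) ht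
  rw [Complex.betaIntegral_eq_Gamma_mul_div _ _ (by simpa using ha) (by simpa using hb),
    ← Complex.ofReal_add, Complex.Gamma_ofReal, Complex.Gamma_ofReal,
    Complex.Gamma_ofReal] at hcomplex
  apply Complex.ofReal_injective
  rw [← intervalIntegral.integral_ofReal]
  convert hcomplex using 1
  · refine intervalIntegral.integral_congr fun s hs => ?_
    rw [uIcc_of_le ht.le] at hs
    push_cast [Complex.ofReal_cpow hs.1, Complex.ofReal_cpow (sub_nonneg.2 hs.2)]
    rfl
  · push_cast [Complex.ofReal_cpow ht.le]
    rfl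

noncomputable def riemannLiouville {E : Type*} [NormedAddCommGroup E] [NormedSpace ℝ E]
    (α : ℝ) (φ : ℝ → E) (t : ℝ) : E :=
  (1 / Gamma α) • ∫ s in (0:ℝ)..t, (t - s) ^ (α - 1) • φ s

section RiemannLiouville

variable {E : Type*} [NormedAddCommGroup E] [NormedSpace ℝ E] {α t : ℝ}

theorem intervalIntegrable_rpow_sub_smul (hα : 0 < α) (ht : 0 ≤ t) {φ : ℝ → E}
    (hφ : ContinuousOn φ (Icc 0 t)) :
    IntervalIntegrable (fun s => (t - s) ^ (α - 1) • φ s) volume 0 t := by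
  have hkernel : IntervalIntegrable (fun s => (t - s) ^ (α - 1)) volume 0 t := by
    simpa using ((intervalIntegral.intervalIntegrable_rpow' (by linarith : -1 < α - 1)
      (a := t) (b := 0)).comp_sub_left t)
  exact hkernel.smul_continuousOn (by rwa [uIcc_of_le ht])

theorem riemannLiouville_congr (ht : 0 ≤ t) {φ ψ : ℝ → E} (h : EqOn φ ψ (Icc 0 t)) :
    riemannLiouville α φ t = riemannLiouville α ψ t := by
  unfold riemannLiouville
  rw [intervalIntegral.integral_congr fun s hs => by
    rw [h (by rwa [uIcc_of_le ht] at hs)]]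

theorem riemannLiouville_const_smul (c : ℝ) (φ : ℝ → E) :
    riemannLiouville α (fun s => c • φ s) t = c • riemannLiouville α φ t := by
  simp only [riemannLiouville, smul_comm _ c, intervalIntegral.integral_smul]

theorem riemannLiouville_const_mul (c : ℝ) (φ : ℝ → ℝ) :
    riemannLiouville α (fun s => c * φ s) t = c * riemannLiouville α φ t :=
  riemannLiouville_const_smul c φ

theorem riemannLiouville_sub (hα : 0 < α) (ht : 0 ≤ t) {φ ψ : ℝ → E}
    (hφ : ContinuousOn φ (Icc 0 t)) (hψ : ContinuousOn ψ (Icc 0 t)) :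
    riemannLiouville α (fun s => φ s - ψ s) t =
      riemannLiouville α φ t - riemannLiouville α ψ t := by
  simp only [riemannLiouville, smul_sub]
  rw [← smul_sub, ← intervalIntegral.integral_sub (intervalIntegrable_rpow_sub_smul hα ht hφ)
    (intervalIntegrable_rpow_sub_smul hα ht hψ)]

theorem riemannLiouville_finsetSum (hα : 0 < α) (ht : 0 ≤ t) {ι : Type*} (s : Finset ι)
    {φ : ι → ℝ → E} (hφ : ∀ i ∈ s, ContinuousOn (φ i) (Icc 0 t)) :
    riemannLiouville α (fun x => ∑ i ∈ s, φ i x) t = ∑ i ∈ s, riemannLiouville α (φ i) t := by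
  simp only [riemannLiouville, Finset.smul_sum]
  rw [intervalIntegral.integral_finsetSum fun i hi =>
    intervalIntegrable_rpow_sub_smul hα ht (hφ i hi), Finset.smul_sum]

theorem norm_riemannLiouville_le (hα : 0 < α) (ht : 0 ≤ t) (φ : ℝ → E) :
    ‖riemannLiouville α φ t‖ ≤ riemannLiouville α (fun s => ‖φ s‖) t := by
  rw [riemannLiouville, riemannLiouville, norm_smul, smul_eq_mul,
    Real.norm_of_nonneg (by positivity)]
  gcongr
  refine (intervalIntegral.norm_integral_le_integral_norm ht).trans_eq
    (intervalIntegral.integral_congr fun s hs => ?_)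
  rw [uIcc_of_le ht] at hs
  simp only [norm_smul, smul_eq_mul, Real.norm_of_nonneg (rpow_nonneg (sub_nonneg.2 hs.2) _)]

theorem riemannLiouville_mono (hα : 0 < α) (ht : 0 ≤ t) {φ ψ : ℝ → ℝ}
    (hφ : ContinuousOn φ (Icc 0 t)) (hψ : ContinuousOn ψ (Icc 0 t))
    (hle : ∀ s ∈ Icc 0 t, φ s ≤ ψ s) :
    riemannLiouville α φ t ≤ riemannLiouville α ψ t := by
  unfold riemannLiouville
  gcongr
  refine intervalIntegral.integral_mono_on ht (intervalIntegrable_rpow_sub_smul hα ht hφ)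
    (intervalIntegrable_rpow_sub_smul hα ht hψ) fun s hs => ?_
  exact smul_le_smul_of_nonneg_left (hle s hs) (rpow_nonneg (sub_nonneg.2 hs.2) _)

theorem riemannLiouville_rpow (hα : 0 < α) (ht : 0 ≤ t) {β : ℝ} (hβ : 0 ≤ β) :
    riemannLiouville α (fun s => s ^ β) t =
      Gamma (β + 1) / Gamma (β + α + 1) * t ^ (β + α) := by
  rcases ht.eq_or_lt with rfl | ht
  · simp [riemannLiouville, zero_rpow (by positivity : β + α ≠ 0)]
  have hbeta := integral_rpow_mul_rpow_sub (by positivity : 0 < β + 1) hα ht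
  rw [show β + 1 - 1 = β by ring, show β + 1 + α - 1 = β + α by ring,
    show β + 1 + α = β + α + 1 by ring] at hbeta
  simp only [riemannLiouville, smul_eq_mul, mul_comm ((t - _) ^ (α - 1)), hbeta]
  field_simp [(Gamma_pos_of_pos hα).ne']

end RiemannLiouville

theorem norm_riemannLiouville_sub_le_of_lipschitzWith {E F : Type*} [NormedAddCommGroup E]
    [NormedAddCommGroup F] [NormedSpace ℝ F] {g : E → F} {K : NNReal} (hg : LipschitzWith K g)
    {α t : ℝ} (hα : 0 < α) (ht : 0 ≤ t) {x y : ℝ → E}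
    (hx : ContinuousOn x (Icc 0 t)) (hy : ContinuousOn y (Icc 0 t)) :
    ‖riemannLiouville α (fun s => g (x s)) t - riemannLiouville α (fun s => g (y s)) t‖ ≤
      K * riemannLiouville α (fun s => ‖x s - y s‖) t := by
  have hgx := hg.continuous.comp_continuousOn hx
  have hgy := hg.continuous.comp_continuousOn hy
  calc _ = ‖riemannLiouville α (fun s => g (x s) - g (y s)) t‖ := by
        rw [riemannLiouville_sub (φ := fun s => g (x s)) (ψ := fun s => g (y s)) hα ht hgx hgy]
    _ ≤ riemannLiouville α (fun s => ‖g (x s) - g (y s)‖) t := norm_riemannLiouville_le hα ht _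
    _ ≤ riemannLiouville α (fun s => K * ‖x s - y s‖) t :=
        riemannLiouville_mono hα ht (hgx.sub hgy).norm (continuousOn_const.mul (hx.sub hy).norm)
          fun s _ => hg.norm_sub_le _ _
    _ = K * riemannLiouville α (fun s => ‖x s - y s‖) t := riemannLiouville_const_mul _ _

theorem continuous_mittagLefflerTerm_rpow {α : ℝ} (hα : 0 < α) (L : ℝ) (k : ℕ) :
    Continuous fun s => mittagLefflerTerm α (L * s ^ α) k :=
  ((continuous_const.mul (continuous_rpow_const hα.le)).pow k).div_const _

theorem riemannLiouville_mittagLefflerTerm {α t : ℝ} (hα : 0 < α) (ht : 0 ≤ t) (L : ℝ) (k : ℕ) :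
    L * riemannLiouville α (fun s => mittagLefflerTerm α (L * s ^ α) k) t =
      mittagLefflerTerm α (L * t ^ α) (k + 1) := by
  have hpow (s : ℝ) (hs : 0 ≤ s) (m : ℕ) : (L * s ^ α) ^ m = L ^ m * s ^ (α * m) := by
    rw [mul_pow, ← rpow_natCast (s ^ α), ← rpow_mul hs]
  have hcongr : EqOn (fun s => mittagLefflerTerm α (L * s ^ α) k)
      (fun s => L ^ k / Gamma (α * k + 1) * s ^ (α * k)) (Icc 0 t) := fun s hs => by
    simp only [mittagLefflerTerm, hpow s hs.1]
    ring
  rw [riemannLiouville_congr ht hcongr, riemannLiouville_const_mul,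
    riemannLiouville_rpow hα ht (by positivity), mittagLefflerTerm, hpow t ht,
    show α * ((k + 1 : ℕ) : ℝ) = α * k + α by push_cast; ring]
  field_simp
  ring

theorem le_add_sum_mittagLefflerTerm_succ {α L T F : ℝ} {u : ℝ → ℝ} {a : ℕ → ℝ} {n : ℕ}
    (hα : 0 < α) (hL : 0 ≤ L) (hu : ContinuousOn u (Icc 0 T))
    (hle : ∀ t ∈ Icc 0 T, u t ≤ F + L * riemannLiouville α u t)
    (hbound : ∀ t ∈ Icc 0 T, u t ≤ ∑ k ∈ Finset.range n, a k * mittagLefflerTerm α (L * t ^ α) k)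
    {t : ℝ} (ht : t ∈ Icc 0 T) :
    u t ≤ F + ∑ k ∈ Finset.range n, a k * mittagLefflerTerm α (L * t ^ α) (k + 1) := by
  have hsub : Icc 0 t ⊆ Icc 0 T := Icc_subset_Icc_right ht.2
  have hcont (k : ℕ) : ContinuousOn (fun s => a k * mittagLefflerTerm α (L * s ^ α) k) (Icc 0 t) :=
    (continuous_const.mul (continuous_mittagLefflerTerm_rpow hα L k)).continuousOn
  calc u t ≤ F + L * riemannLiouville α u t := hle t ht
    _ ≤ F + L * riemannLiouville α
          (fun s => ∑ k ∈ Finset.range n, a k * mittagLefflerTerm α (L * s ^ α) k) t := by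
        gcongr
        exact riemannLiouville_mono hα ht.1 (hu.mono hsub)
          (continuousOn_finsetSum _ fun k _ => hcont k) fun s hs => hbound s (hsub hs)
    _ = F + ∑ k ∈ Finset.range n, a k * mittagLefflerTerm α (L * t ^ α) (k + 1) := by
        rw [riemannLiouville_finsetSum hα ht.1 _ fun k _ => hcont k, Finset.mul_sum]
        congr 1
        refine Finset.sum_congr rfl fun k _ => ?_
        rw [← riemannLiouville_mittagLefflerTerm hα ht.1 L k, riemannLiouville_const_mul]
        ring

theorem le_mul_mittagLeffler_of_le_add_riemannLiouville {α L T F : ℝ} {u : ℝ → ℝ}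
    (hα0 : 0 < α) (hα1 : α < 1) (hL : 0 ≤ L) (hu : ContinuousOn u (Icc 0 T))
    (hle : ∀ t ∈ Icc 0 T, u t ≤ F + L * riemannLiouville α u t) :
    ∀ t ∈ Icc 0 T, u t ≤ F * mittagLeffler α (L * t ^ α) := by
  obtain ⟨M, hM⟩ := isCompact_Icc.bddAbove_image hu
  -- the bound below is the `n`-th iterate of `φ ↦ F + L I^α φ`, started at the constant `M`
  have hiter (n : ℕ) : ∀ t ∈ Icc 0 T, u t ≤ ∑ k ∈ Finset.range (n + 1),
      (if k < n then F else M) * mittagLefflerTerm α (L * t ^ α) k := by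
    induction n with
    | zero =>
      intro t ht
      simpa [mittagLefflerTerm] using hM (mem_image_of_mem u ht)
    | succ n ih =>
      intro t ht
      have hterm0 : mittagLefflerTerm α (L * t ^ α) 0 = 1 := by simp [mittagLefflerTerm]
      rw [Finset.sum_range_succ', hterm0, if_pos n.succ_pos, mul_one, add_comm]
      simpa only [Nat.succ_lt_succ_iff] using
        le_add_sum_mittagLefflerTerm_succ hα0 hL hu hle ih ht
  intro t ht
  have hsum := summable_mittagLefflerTerm hα0 hα1 (L * t ^ α)
  have hlim : Tendsto (fun n => F * ∑ k ∈ Finset.range n, mittagLefflerTerm α (L * t ^ α) k +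
      M * mittagLefflerTerm α (L * t ^ α) n) atTop (𝓝 (F * mittagLeffler α (L * t ^ α) + M * 0)) :=
    (hsum.hasSum.tendsto_sum_nat.const_mul F).add (hsum.tendsto_atTop_zero.const_mul M)
  refine (ge_of_tendsto' hlim fun n => (hiter n t ht).trans_eq ?_).trans_eq (by ring)
  rw [Finset.sum_range_succ, if_neg n.lt_irrefl, Finset.mul_sum]
  congr 1
  exact Finset.sum_congr rfl fun k hk => by rw [if_pos (Finset.mem_range.1 hk)]

theorem stmt4 {d : ℕ} (α : ℝ) (hα : α ∈ Set.Ioo (0:ℝ) 1)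
    (g : EuclideanSpace ℝ (Fin d) → EuclideanSpace ℝ (Fin d))
    (L : ℝ) (hL : 0 < L)
    (hg : ∀ x y : EuclideanSpace ℝ (Fin d), ‖g x - g y‖ ≤ L * ‖x - y‖)
    (T : ℝ) (hT : 0 < T)
    (f h : ℝ → EuclideanSpace ℝ (Fin d))
    (hf : ContinuousOn f (Set.Icc 0 T)) (hh : ContinuousOn h (Set.Icc 0 T))
    (xf xh : ℝ → EuclideanSpace ℝ (Fin d))
    (hxf : ContinuousOn xf (Set.Icc 0 T))
    (hxh : ContinuousOn xh (Set.Icc 0 T))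
    (hxfeq : ∀ t ∈ Set.Icc (0:ℝ) T,
      xf t = f t + (1 / Real.Gamma α) •
        ∫ s in (0:ℝ)..t, ((t - s) ^ (α - 1)) • g (xf s))
    (hxheq : ∀ t ∈ Set.Icc (0:ℝ) T,
      xh t = h t + (1 / Real.Gamma α) •
        ∫ s in (0:ℝ)..t, ((t - s) ^ (α - 1)) • g (xh s)) :
    (⨆ t : Set.Icc (0:ℝ) T, ‖xf t.1 - xh t.1‖) ≤
      (⨆ t : Set.Icc (0:ℝ) T, ‖f t.1 - h t.1‖) * mittagLeffler α (L * T ^ α) := by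
  obtain ⟨hα0, hα1⟩ := hα
  have hgLip : LipschitzWith L.toNNReal g := LipschitzWith.of_dist_le_mul fun x y => by
    simpa [dist_eq_norm, hL.le] using hg x y
  set F := ⨆ t : Icc (0:ℝ) T, ‖f t.1 - h t.1‖
  have hF (t : ℝ) (ht : t ∈ Icc 0 T) : ‖f t - h t‖ ≤ F := by
    refine le_ciSup (f := fun t : Icc (0:ℝ) T => ‖f t.1 - h t.1‖) ?_ ⟨t, ht⟩
    simpa [image_eq_range] using isCompact_Icc.bddAbove_image (hf.sub hh).norm
  have hvolterra : ∀ t ∈ Icc 0 T,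
      ‖xf t - xh t‖ ≤ F + L * riemannLiouville α (fun s => ‖xf s - xh s‖) t := by
    intro t ht
    have hsub : Icc 0 t ⊆ Icc 0 T := Icc_subset_Icc_right ht.2
    calc ‖xf t - xh t‖ = ‖(f t - h t) + (riemannLiouville α (fun s => g (xf s)) t -
          riemannLiouville α (fun s => g (xh s)) t)‖ := by
          rw [hxfeq t ht, hxheq t ht, riemannLiouville, riemannLiouville]
          abel_nf
      _ ≤ F + L * riemannLiouville α (fun s => ‖xf s - xh s‖) t := by
          refine (norm_add_le _ _).trans (add_le_add (hF t ht) ?_)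
          simpa [hL.le] using norm_riemannLiouville_sub_le_of_lipschitzWith hgLip hα0 ht.1
            (hxf.mono hsub) (hxh.mono hsub)
  have hF0 : 0 ≤ F := (norm_nonneg _).trans (hF 0 ⟨le_rfl, hT.le⟩)
  have : Nonempty (Icc 0 T) := ⟨⟨0, le_rfl, hT.le⟩⟩
  refine ciSup_le fun ⟨t, ht⟩ => ?_
  refine (le_mul_mittagLeffler_of_le_add_riemannLiouville hα0 hα1 hL.le (hxf.sub hxh).norm
    hvolterra t ht).trans (mul_le_mul_of_nonneg_left ?_ hF0)
  have hLt : 0 ≤ L * t ^ α := mul_nonneg hL.le (rpow_nonneg ht.1 α)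
  have htT : L * t ^ α ≤ L * T ^ α :=
    mul_le_mul_of_nonneg_left (rpow_le_rpow ht.1 ht.2 hα0.le) hL.le
  exact mittagLeffler_monotoneOn hα0 hα1 hLt (hLt.trans htT) htT
end

section
/- Let α ∈ (0,1), let g : ℝ^d → ℝ^d satisfy a global Lipschitz condition with constant L > 0, let τ ≥ 0, and let f : ℝ₊ → ℝ^d be continuous with x_f the unique continuous global solution of x_f(t) = f(t) + (1/Γ(α)) ∫₀ᵗ (t−s)^{α−1} g(x_f(s)) ds. Define (T_τ f)(θ) = f(τ + θ) + (1/Γ(α)) ∫₀^τ (τ + θ − s)^{α−1} g(x_f(s)) ds. Then the function ψ(t) := x_f(t + τ) is the unique continuous solution of the singular Volterra integral equation with forcing term T_τ f, i.e. ψ(t) = (T_τ f)(t) + (1/Γ(α)) ∫₀ᵗ (t−s)^{α−1} g(ψ(s)) ds for all t ≥ 0; equivalently x_{T_τ f}(t) = x_f(t + τ) for all t ≥ 0. -/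
/-!
Splitting `∫₀^{t+τ}` at `τ` and substituting `s ↦ s + τ` in the second piece shows that
`t ↦ x_f (t + τ)` solves the equation with forcing term `T_τ f`. Uniqueness comes from a singular
Gronwall inequality: the distance `z` of two continuous solutions satisfies
`z t ≤ (L / Γ(α)) ∫₀ᵗ (t - s)^{α-1} z s ds`. If `z` vanishes on `[0, a]` and
`L h^α / (α Γ(α)) ≤ 1/2`, its maximum on `[0, a + h]` is at most half of itself, hence zero;
stepping by `h` covers `[0, ∞)`.
-/

open Real MeasureTheory Set

/-- The operator `(T_τ f)(θ) = f(τ+θ) + (1/Γ(α)) ∫₀^τ (τ+θ−s)^{α−1} g(x_f(s)) ds`,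
with `x_f` the solution for the forcing term `f`. -/
noncomputable def semigroupOp {d : ℕ} (α : ℝ)
    (g : EuclideanSpace ℝ (Fin d) → EuclideanSpace ℝ (Fin d))
    (xf : ℝ → EuclideanSpace ℝ (Fin d))
    (τ : ℝ) (f : ℝ → EuclideanSpace ℝ (Fin d)) :
    ℝ → EuclideanSpace ℝ (Fin d) :=
  fun θ => f (τ + θ) + (1 / Real.Gamma α) •
    ∫ s in (0:ℝ)..τ, ((τ + θ - s) ^ (α - 1)) • g (xf s)

open intervalIntegral Filter Topology
open scoped NNReal

variable {E : Type*} [NormedAddCommGroup E] [NormedSpace ℝ E] {α : ℝ}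

lemma intervalIntegrable_sub_rpow (hα : 0 < α) (t a b : ℝ) :
    IntervalIntegrable (fun s => (t - s) ^ (α - 1)) volume a b := by
  simpa using (intervalIntegrable_rpow' (by linarith) (a := t - a) (b := t - b)).comp_sub_left t

lemma intervalIntegrable_sub_rpow_smul (hα : 0 < α) {u : ℝ → E} (hu : ContinuousOn u (Ici 0))
    (t : ℝ) {a b : ℝ} (ha : 0 ≤ a) (hb : 0 ≤ b) :
    IntervalIntegrable (fun s => (t - s) ^ (α - 1) • u s) volume a b :=
  (intervalIntegrable_sub_rpow hα t a b).smul_continuousOn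
    (hu.mono (ordConnected_Ici.uIcc_subset ha hb))

lemma integral_sub_rpow (hα : 0 < α) (a t : ℝ) :
    ∫ s in a..t, (t - s) ^ (α - 1) = (t - a) ^ α / α := by
  rw [integral_comp_sub_left (fun s => s ^ (α - 1)) t, sub_self,
    integral_rpow (Or.inl (by linarith)), sub_add_cancel, zero_rpow hα.ne', sub_zero]

lemma integral_sub_rpow_mul_le {z : ℝ → ℝ} {a t M : ℝ} (hα : 0 < α) (ha : 0 ≤ a) (hat : a ≤ t)
    (hz : ContinuousOn z (Ici 0)) (hzero : ∀ s ∈ Icc 0 a, z s = 0)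
    (hM : ∀ s ∈ Icc a t, z s ≤ M) :
    ∫ s in (0:ℝ)..t, (t - s) ^ (α - 1) * z s ≤ M * ((t - a) ^ α / α) := by
  have hint₁ : IntervalIntegrable (fun s => (t - s) ^ (α - 1) * z s) volume 0 a :=
    intervalIntegrable_sub_rpow_smul hα hz t le_rfl ha
  have hint₂ : IntervalIntegrable (fun s => (t - s) ^ (α - 1) * z s) volume a t :=
    intervalIntegrable_sub_rpow_smul hα hz t ha (ha.trans hat)
  have hvanish : ∫ s in (0:ℝ)..a, (t - s) ^ (α - 1) * z s = 0 := by
    rw [integral_congr (g := fun _ => (0:ℝ)) fun s hs => ?_, intervalIntegral.integral_zero]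
    rw [uIcc_of_le ha] at hs
    simp [hzero s hs]
  calc ∫ s in (0:ℝ)..t, (t - s) ^ (α - 1) * z s
      = ∫ s in a..t, (t - s) ^ (α - 1) * z s := by
        rw [← integral_add_adjacent_intervals hint₁ hint₂, hvanish, zero_add]
    _ ≤ ∫ s in a..t, (t - s) ^ (α - 1) * M :=
        integral_mono_on hat hint₂ ((intervalIntegrable_sub_rpow hα t a t).mul_const M)
          fun s hs => mul_le_mul_of_nonneg_left (hM s hs) (rpow_nonneg (sub_nonneg.2 hs.2) _)
    _ = M * ((t - a) ^ α / α) := by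
        rw [intervalIntegral.integral_mul_const, integral_sub_rpow hα, mul_comm]

section Gronwall

variable {C : ℝ} {z : ℝ → ℝ}

lemma singular_gronwall_step (hα : 0 < α) (hC : 0 ≤ C) (hz : ContinuousOn z (Ici 0))
    (hz₀ : ∀ s, 0 ≤ z s)
    (hineq : ∀ t, 0 ≤ t → z t ≤ C * ∫ s in (0:ℝ)..t, (t - s) ^ (α - 1) * z s)
    {a h : ℝ} (ha : 0 ≤ a) (hh : 0 ≤ h) (hCh : C * (h ^ α / α) ≤ 1 / 2)
    (hzero : ∀ s ∈ Icc 0 a, z s = 0) : ∀ s ∈ Icc 0 (a + h), z s = 0 := by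
  obtain ⟨t₀, ht₀, hmax⟩ := isCompact_Icc.exists_isMaxOn (nonempty_Icc.2 (add_nonneg ha hh))
    (hz.mono Icc_subset_Ici_self)
  suffices z t₀ = 0 from fun s hs => le_antisymm (this ▸ hmax hs) (hz₀ s)
  rcases le_or_gt t₀ a with hle | hlt
  · exact hzero t₀ ⟨ht₀.1, hle⟩
  have hhalf : z t₀ ≤ z t₀ / 2 := calc
    z t₀ ≤ C * ∫ s in (0:ℝ)..t₀, (t₀ - s) ^ (α - 1) * z s := hineq t₀ ht₀.1
    _ ≤ C * (z t₀ * ((t₀ - a) ^ α / α)) := by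
        gcongr
        exact integral_sub_rpow_mul_le hα ha hlt.le hz hzero
          fun s hs => hmax ⟨ha.trans hs.1, hs.2.trans ht₀.2⟩
    _ ≤ C * (z t₀ * (h ^ α / α)) := by
        have := hz₀ t₀
        gcongr
        linarith [ht₀.2]
    _ = z t₀ * (C * (h ^ α / α)) := by ring
    _ ≤ z t₀ * (1 / 2) := mul_le_mul_of_nonneg_left hCh (hz₀ t₀)
    _ = z t₀ / 2 := by ring
  linarith [hz₀ t₀]

theorem singular_gronwall (hα : 0 < α) (hC : 0 ≤ C) (hz : ContinuousOn z (Ici 0))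
    (hz₀ : ∀ s, 0 ≤ z s)
    (hineq : ∀ t, 0 ≤ t → z t ≤ C * ∫ s in (0:ℝ)..t, (t - s) ^ (α - 1) * z s) :
    ∀ t, 0 ≤ t → z t = 0 := by
  have hsmall : Tendsto (fun h : ℝ => C * (h ^ α / α)) (𝓝[>] 0) (𝓝 0) := by
    have : ContinuousAt (fun h : ℝ => C * (h ^ α / α)) 0 :=
      continuousAt_const.mul ((continuousAt_rpow_const 0 α (Or.inr hα.le)).div_const α)
    simpa [zero_rpow hα.ne'] using this.tendsto.mono_left nhdsWithin_le_nhds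
  obtain ⟨h, hCh, hh⟩ :=
    ((hsmall.eventually (gt_mem_nhds one_half_pos)).and self_mem_nhdsWithin).exists
  have hzero : ∀ n : ℕ, ∀ s ∈ Icc 0 (n * h), z s = 0 := by
    intro n
    induction n with
    | zero =>
      intro s hs
      obtain rfl : s = 0 := by simpa using hs
      exact le_antisymm (by simpa using hineq 0 le_rfl) (hz₀ 0)
    | succ n ih =>
      rw [Nat.cast_succ, add_one_mul]
      exact singular_gronwall_step hα hC hz hz₀ hineq (by positivity) hh.le hCh.le ih
  intro t ht
  obtain ⟨n, hn⟩ := exists_nat_ge (t / h)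
  exact hzero n t ⟨ht, (div_le_iff₀ hh).1 hn⟩

end Gronwall

/-- The Riemann–Liouville integral `I^α u`. -/
noncomputable def fracIntegral (α : ℝ) (u : ℝ → E) (t : ℝ) : E :=
  (1 / Gamma α) • ∫ s in (0:ℝ)..t, (t - s) ^ (α - 1) • u s

lemma fracIntegral_add (hα : 0 < α) {u : ℝ → E} (hu : ContinuousOn u (Ici 0)) {τ t : ℝ}
    (hτ : 0 ≤ τ) (ht : 0 ≤ t) :
    fracIntegral α u (t + τ) = (1 / Gamma α) • (∫ s in (0:ℝ)..τ, (t + τ - s) ^ (α - 1) • u s)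
      + fracIntegral α (fun s => u (s + τ)) t := by
  have hshift : ∫ s in (0:ℝ)..t, (t - s) ^ (α - 1) • u (s + τ)
      = ∫ s in τ..t + τ, (t + τ - s) ^ (α - 1) • u s := by
    simpa [add_sub_add_right_eq_sub] using
      integral_comp_add_right (fun s => (t + τ - s) ^ (α - 1) • u s) τ (a := 0) (b := t)
  rw [fracIntegral, fracIntegral, hshift, ← smul_add, integral_add_adjacent_intervals
    (intervalIntegrable_sub_rpow_smul hα hu _ le_rfl hτ)
    (intervalIntegrable_sub_rpow_smul hα hu _ hτ (by positivity))]

lemma norm_fracIntegral_sub_le (hα : 0 < α) {K : ℝ≥0} {g : E → E} (hg : LipschitzWith K g)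
    {y₁ y₂ : ℝ → E} (hy₁ : ContinuousOn y₁ (Ici 0)) (hy₂ : ContinuousOn y₂ (Ici 0))
    {t : ℝ} (ht : 0 ≤ t) :
    ‖fracIntegral α (fun s => g (y₁ s)) t - fracIntegral α (fun s => g (y₂ s)) t‖
      ≤ K / Gamma α * ∫ s in (0:ℝ)..t, (t - s) ^ (α - 1) * ‖y₁ s - y₂ s‖ := by
  have hΓ : 0 < Gamma α := Gamma_pos_of_pos hα
  have hgy₁ : ContinuousOn (fun s => g (y₁ s)) (Ici 0) := hg.continuous.comp_continuousOn hy₁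
  have hgy₂ : ContinuousOn (fun s => g (y₂ s)) (Ici 0) := hg.continuous.comp_continuousOn hy₂
  calc ‖fracIntegral α (fun s => g (y₁ s)) t - fracIntegral α (fun s => g (y₂ s)) t‖
      = 1 / Gamma α * ‖∫ s in (0:ℝ)..t, (t - s) ^ (α - 1) • (g (y₁ s) - g (y₂ s))‖ := by
        rw [fracIntegral, fracIntegral, ← smul_sub, ← integral_sub
          (intervalIntegrable_sub_rpow_smul hα hgy₁ t le_rfl ht)
          (intervalIntegrable_sub_rpow_smul hα hgy₂ t le_rfl ht), norm_smul,
          norm_of_nonneg (one_div_pos.2 hΓ).le]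
        simp_rw [smul_sub]
    _ ≤ 1 / Gamma α * ∫ s in (0:ℝ)..t, (t - s) ^ (α - 1) * (K * ‖y₁ s - y₂ s‖) := by
        gcongr
        refine (intervalIntegral.norm_integral_le_integral_norm ht).trans (integral_mono_on ht
          (intervalIntegrable_sub_rpow_smul hα (hgy₁.sub hgy₂) t le_rfl ht).norm
          (intervalIntegrable_sub_rpow_smul hα
            (continuousOn_const.mul (hy₁.sub hy₂).norm) t le_rfl ht) fun s hs => ?_)
        have hker : 0 ≤ (t - s) ^ (α - 1) := rpow_nonneg (sub_nonneg.2 hs.2) _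
        rw [norm_smul, norm_of_nonneg hker]
        exact mul_le_mul_of_nonneg_left (hg.norm_sub_le _ _) hker
    _ = K / Gamma α * ∫ s in (0:ℝ)..t, (t - s) ^ (α - 1) * ‖y₁ s - y₂ s‖ := by
        simp_rw [mul_left_comm _ (K : ℝ), intervalIntegral.integral_const_mul]
        ring

theorem volterra_solution_unique (hα : 0 < α) {K : ℝ≥0} {g : E → E} (hg : LipschitzWith K g)
    {F y₁ y₂ : ℝ → E} (hy₁ : ContinuousOn y₁ (Ici 0)) (hy₂ : ContinuousOn y₂ (Ici 0))
    (h₁ : ∀ t, 0 ≤ t → y₁ t = F t + fracIntegral α (fun s => g (y₁ s)) t)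
    (h₂ : ∀ t, 0 ≤ t → y₂ t = F t + fracIntegral α (fun s => g (y₂ s)) t) :
    ∀ t, 0 ≤ t → y₁ t = y₂ t := by
  have hdist := singular_gronwall (C := K / Gamma α) (z := fun s => ‖y₁ s - y₂ s‖) hα
    (by positivity) (hy₁.sub hy₂).norm (fun s => norm_nonneg _)
    fun t ht => by
      rw [h₁ t ht, h₂ t ht, add_sub_add_left_eq_sub]
      exact norm_fracIntegral_sub_le hα hg hy₁ hy₂ ht
  exact fun t ht => sub_eq_zero.1 (norm_eq_zero.1 (hdist t ht))

theorem stmt11_general {d : ℕ} (α : ℝ) (hα : α ∈ Set.Ioo (0:ℝ) 1)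
    (g : EuclideanSpace ℝ (Fin d) → EuclideanSpace ℝ (Fin d))
    (L : ℝ)
    (hg : ∀ x y : EuclideanSpace ℝ (Fin d), ‖g x - g y‖ ≤ L * ‖x - y‖)
    (τ : ℝ) (hτ : 0 ≤ τ)
    (f : ℝ → EuclideanSpace ℝ (Fin d))
    (xf : ℝ → EuclideanSpace ℝ (Fin d)) (hxf : ContinuousOn xf (Set.Ici 0))
    (hxfeq : ∀ t : ℝ, 0 ≤ t →
      xf t = f t + (1 / Real.Gamma α) •
        ∫ s in (0:ℝ)..t, ((t - s) ^ (α - 1)) • g (xf s)) :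
    (ContinuousOn (fun t => xf (t + τ)) (Set.Ici 0) ∧
      ∀ t : ℝ, 0 ≤ t →
        xf (t + τ) = semigroupOp α g xf τ f t + (1 / Real.Gamma α) •
          ∫ s in (0:ℝ)..t, ((t - s) ^ (α - 1)) • g (xf (s + τ))) ∧
    (∀ y : ℝ → EuclideanSpace ℝ (Fin d), ContinuousOn y (Set.Ici 0) →
      (∀ t : ℝ, 0 ≤ t →
        y t = semigroupOp α g xf τ f t + (1 / Real.Gamma α) •
          ∫ s in (0:ℝ)..t, ((t - s) ^ (α - 1)) • g (y s)) →
      ∀ t : ℝ, 0 ≤ t → y t = xf (t + τ)) := by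
  have hgL : LipschitzWith L.toNNReal g := LipschitzWith.of_dist_le_mul fun x y => by
    rw [dist_eq_norm, dist_eq_norm]
    exact (hg x y).trans (by gcongr; exact le_coe_toNNReal L)
  have hψ : ContinuousOn (fun t => xf (t + τ)) (Ici 0) :=
    hxf.comp (continuous_add_const τ).continuousOn fun t (ht : 0 ≤ t) =>
      show 0 ≤ t + τ by positivity
  have hshift (t : ℝ) (ht : 0 ≤ t) : xf (t + τ)
      = semigroupOp α g xf τ f t + fracIntegral α (fun s => g (xf (s + τ))) t := by
    rw [hxfeq _ (by positivity), semigroupOp, add_comm τ t, add_assoc]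
    exact congrArg _ (fracIntegral_add (u := fun s => g (xf s)) hα.1
      (hgL.continuous.comp_continuousOn hxf) hτ ht)
  exact ⟨⟨hψ, hshift⟩, fun y hy hyeq => volterra_solution_unique hα.1 hgL hy hψ hyeq hshift⟩

theorem stmt11 {d : ℕ} (α : ℝ) (hα : α ∈ Set.Ioo (0:ℝ) 1)
    (g : EuclideanSpace ℝ (Fin d) → EuclideanSpace ℝ (Fin d))
    (L : ℝ) (hL : 0 < L)
    (hg : ∀ x y : EuclideanSpace ℝ (Fin d), ‖g x - g y‖ ≤ L * ‖x - y‖)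
    (τ : ℝ) (hτ : 0 ≤ τ)
    (f : ℝ → EuclideanSpace ℝ (Fin d)) (hf : ContinuousOn f (Set.Ici 0))
    (xf : ℝ → EuclideanSpace ℝ (Fin d)) (hxf : ContinuousOn xf (Set.Ici 0))
    (hxfeq : ∀ t : ℝ, 0 ≤ t →
      xf t = f t + (1 / Real.Gamma α) •
        ∫ s in (0:ℝ)..t, ((t - s) ^ (α - 1)) • g (xf s)) :
    (ContinuousOn (fun t => xf (t + τ)) (Set.Ici 0) ∧
      ∀ t : ℝ, 0 ≤ t →
        xf (t + τ) = semigroupOp α g xf τ f t + (1 / Real.Gamma α) •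
          ∫ s in (0:ℝ)..t, ((t - s) ^ (α - 1)) • g (xf (s + τ))) ∧
    (∀ y : ℝ → EuclideanSpace ℝ (Fin d), ContinuousOn y (Set.Ici 0) →
      (∀ t : ℝ, 0 ≤ t →
        y t = semigroupOp α g xf τ f t + (1 / Real.Gamma α) •
          ∫ s in (0:ℝ)..t, ((t - s) ^ (α - 1)) • g (y s)) →
      ∀ t : ℝ, 0 ≤ t → y t = xf (t + τ)) :=
  stmt11_general α hα g L hg τ hτ f xf hxf hxfeq
end
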